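/- arXiv:2604.24530 — 5 statements merged into one kernel-verified Lean document; each statement's English description precedes it below -/
import Mathlib

section
/- Under the density π(v1,v2,s1,s2) = 2/(v1(1-s2)) supported on {v2 < v1, 1/2 ≤ s2 < s1 ≤ 1, 2s2 - 1 ≤ v1 ≤ 1}, the conditional expectation of v1 given a signal pair (s1,s2) with s1 > s2 equals s2, i.e., ∫_{2s2-1}^{1} v1 · (∫_0^{v1} (1/4)·(2/(v1(1-s2))) dv2) dv1 = s2. -/
open MeasureTheory

/-- Under the density `π(v1,v2,s1,s2) = 2/(v1(1-s2))` supported on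
`{v2 < v1, 1/2 ≤ s2 < s1 ≤ 1, 2s2 - 1 ≤ v1 ≤ 1}` (with signal marginal density 4),
the conditional expectation of `v1` given a signal pair `(s1, s2)` with `s1 > s2`
equals `s2`. -/
theorem conditional_expectation_winner (s1 s2 : ℝ)
    (h1 : 1/2 ≤ s2) (h2 : s2 < s1) (h3 : s1 ≤ 1) :
    (∫ v1 in (2*s2 - 1)..1,
        v1 * (∫ v2 in (0:ℝ)..v1, (1/4) * (2 / (v1 * (1 - s2))))) = s2 := by
  have hs : s2 < 1 := lt_of_lt_of_le h2 h3
  have hne : (1 - s2) ≠ 0 := by linarith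
  have key : ∀ v1 : ℝ,
      v1 * (∫ v2 in (0:ℝ)..v1, (1/4) * (2 / (v1 * (1 - s2))))
        = v1 * (1 / (2 * (1 - s2))) := by
    intro v1
    rw [intervalIntegral.integral_const]
    rcases eq_or_ne v1 0 with h | h
    · simp [h]
    · field_simp
      have h4 : -(s2 * v1 * 4) + v1 * 4 ≠ 0 := by
        have e : -(s2 * v1 * 4) + v1 * 4 = 4 * v1 * (1 - s2) := by ring
        rw [e]; exact mul_ne_zero (mul_ne_zero (by norm_num) h) hne
      calc _ = (-(s2 * v1 * 4) + v1 * 4) * (-(s2 * v1 * 4) + v1 * 4)⁻¹ := by ring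
        _ = 1 := mul_inv_cancel₀ h4
  rw [intervalIntegral.integral_congr (fun x _ => key x)]
  rw [intervalIntegral.integral_mul_const, integral_id]
  field_simp
  ring
end

section
/- Let g be a probability density on an interval (a, b) that is non-decreasing, let s ∈ (a,b), let κ = (s+a)/2, and fix ε > 0 and N ≥ 2. Then ∫_a^κ (-(y-a)ε/(2N)) g(y) dy + ∫_κ^s ((s-y)ε/N) g(y) dy ≥ (ε/(2N)) ∫_a^κ (t-a) g(t) dt > 0. -/
/-!
Reflecting `[a, κ]` onto `[κ, s]` by `t ↦ a + s - t` turns `∫_κ^s (s - y) g(y) dy` into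
`∫_a^κ (t - a) g(a + s - t) dt`, and `g(a + s - t) ≥ g(t)` there because `g` is non-decreasing.
Hence the gain `(ε/N) ∫_κ^s (s - y) g` is at least twice the loss
`(ε/(2N)) ∫_a^κ (y - a) g`.
-/

open MeasureTheory

open Set

theorem integral_comp_reflect_lower_half (f : ℝ → ℝ) (a s : ℝ) :
    ∫ t in a..(s + a) / 2, f (a + s - t) = ∫ y in (s + a) / 2..s, f y := by
  rw [intervalIntegral.integral_comp_sub_left, show a + s - (s + a) / 2 = (s + a) / 2 by ring,
    add_sub_cancel_left]

theorem MonotoneOn.integral_lower_half_le_integral_upper_half {g : ℝ → ℝ} {a s : ℝ}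
    (hg : MonotoneOn g (Ioo a s)) (has : a ≤ s)
    (hlow : IntervalIntegrable (fun t => (t - a) * g t) volume a ((s + a) / 2))
    (hupp : IntervalIntegrable (fun y => (s - y) * g y) volume ((s + a) / 2) s) :
    ∫ t in a..(s + a) / 2, (t - a) * g t ≤ ∫ y in (s + a) / 2..s, (s - y) * g y := by
  have hreflect : IntervalIntegrable (fun t => (s - (a + s - t)) * g (a + s - t)) volume
      a ((s + a) / 2) := by
    simpa [show a + s - (s + a) / 2 = (s + a) / 2 by ring] using (hupp.comp_sub_left (a + s)).symm
  rw [← integral_comp_reflect_lower_half (fun y => (s - y) * g y)]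
  refine intervalIntegral.integral_mono_on_of_le_Ioo (by linarith) hlow hreflect fun t ht => ?_
  have hle : g t ≤ g (a + s - t) :=
    hg ⟨ht.1, by linarith [ht.2]⟩ ⟨by linarith [ht.2], by linarith [ht.1]⟩
      (by linarith [ht.2])
  calc (t - a) * g t ≤ (t - a) * g (a + s - t) := by gcongr; exact (sub_pos.2 ht.1).le
    _ = (s - (a + s - t)) * g (a + s - t) := by ring

theorem interim_surplus_positive_general (a b s ε : ℝ) (N : ℕ) (g : ℝ → ℝ)
    (hs : s ∈ Set.Ioo a b) (hε : 0 < ε) (hN : 2 ≤ N)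
    (hg0 : ∀ y ∈ Set.Ioo a b, 0 < g y)
    (hgmono : MonotoneOn g (Set.Ioo a b))
    (hint1 : IntervalIntegrable (fun y => (y - a) * g y) volume a b)
    (hint2 : IntervalIntegrable (fun y => (s - y) * g y) volume a b) :
    0 < (ε/(2*N)) * ∫ t in a..((s + a)/2), (t - a) * g t ∧
    (∫ y in a..((s + a)/2), (-((y - a) * ε/(2*N))) * g y)
        + (∫ y in ((s + a)/2)..s, ((s - y) * ε/N) * g y)
      ≥ (ε/(2*N)) * ∫ t in a..((s + a)/2), (t - a) * g t := by
  obtain ⟨has, hsb⟩ := hs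
  have hN0 : (0 : ℝ) < N := by exact_mod_cast (by omega : 0 < N)
  have hc : 0 < ε / (2 * N) := by positivity
  have hmid : (s + a) / 2 ∈ uIcc a b := by
    rw [uIcc_of_le (by linarith)]; constructor <;> linarith
  have hlow := hint1.mono_set (uIcc_subset_uIcc left_mem_uIcc hmid)
  have hupp := hint2.mono_set
    (uIcc_subset_uIcc hmid (Icc_subset_uIcc (Ioo_subset_Icc_self ⟨has, hsb⟩)))
  have hpos : 0 < ∫ t in a..(s + a) / 2, (t - a) * g t :=
    intervalIntegral.intervalIntegral_pos_of_pos_on hlow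
      (fun t ht => mul_pos (sub_pos.2 ht.1) (hg0 t ⟨ht.1, by linarith [ht.2]⟩)) (by linarith)
  have hgain := MonotoneOn.integral_lower_half_le_integral_upper_half
    (hgmono.mono (Ioo_subset_Ioo_right hsb.le)) has.le hlow hupp
  refine ⟨mul_pos hc hpos, ?_⟩
  have hloss_eq : (fun y => -((y - a) * ε / (2 * N)) * g y)
      = fun y => -(ε / (2 * N)) * ((y - a) * g y) := by ext; ring
  have hgain_eq : (fun y => (s - y) * ε / N * g y)
      = fun y => 2 * (ε / (2 * N)) * ((s - y) * g y) := by ext; field_simp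
  rw [hloss_eq, hgain_eq, intervalIntegral.integral_const_mul, intervalIntegral.integral_const_mul]
  linarith [mul_le_mul_of_nonneg_left hgain hc.le]

/-- Key interim-surplus inequality: for a non-decreasing strictly positive probability
density `g` on `(a,b)`, a signal `s ∈ (a,b)`, kink `κ = (s+a)/2`, `ε > 0` and `N ≥ 2`,
the net interim surplus
`∫_a^κ (-(y-a)ε/(2N)) g(y) dy + ∫_κ^s ((s-y)ε/N) g(y) dy`
is at least `(ε/(2N)) ∫_a^κ (t-a) g(t) dt`, which is strictly positive. -/
theorem interim_surplus_positive (a b s ε : ℝ) (N : ℕ) (g : ℝ → ℝ)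
    (hab : a < b) (hs : s ∈ Set.Ioo a b) (hε : 0 < ε) (hN : 2 ≤ N)
    (hg0 : ∀ y ∈ Set.Ioo a b, 0 < g y)
    (hgmono : MonotoneOn g (Set.Ioo a b))
    (hgint : IntervalIntegrable g volume a b)
    (hg1 : (∫ y in a..b, g y) = 1)
    (hint1 : IntervalIntegrable (fun y => (y - a) * g y) volume a b)
    (hint2 : IntervalIntegrable (fun y => (s - y) * g y) volume a b) :
    0 < (ε/(2*N)) * ∫ t in a..((s + a)/2), (t - a) * g t ∧
    (∫ y in a..((s + a)/2), (-((y - a) * ε/(2*N))) * g y)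
        + (∫ y in ((s + a)/2)..s, ((s - y) * ε/N) * g y)
      ≥ (ε/(2*N)) * ∫ t in a..((s + a)/2), (t - a) * g t :=
  interim_surplus_positive_general a b s ε N g hs hε hN hg0 hgmono hint1 hint2
end

section
/- Let μ, ν be probability measures on a finite set V ⊂ ℝ such that ν is a mean-preserving contraction of μ (i.e., ∫_{−∞}^{x}(F_μ(t) − F_ν(t)) dt ≥ 0 for all x and both have equal means). Then there exists a family of probability measures (Q_t)_{t ∈ supp ν} on V such that ∫ Q_t(·) dν(t) = μ and the mean of Q_t equals t for every t in the support of ν. -/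
open Finset

private lemma abel1 (P G : ℕ → ℝ) (n : ℕ) :
    ∑ i ∈ range n, (P (i+1) - P i) * G i
      = P n * G n - P 0 * G 0 - ∑ i ∈ range n, P (i+1) * (G (i+1) - G i) := by
  induction n with
  | zero => simp
  | succ n ih => rw [sum_range_succ, sum_range_succ, ih]; ring

private lemma list_sum_conv (f : ℝ → ℝ) (l : List ℝ) :
    (l.map f).sum = ∑ i ∈ range l.length, f (l.getD i 0) := by
  induction l with
  | nil => simp
  | cons a l ih =>
      rw [List.map_cons, List.sum_cons, List.length_cons, Finset.sum_range_succ', ih]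
      simp [add_comm]

private lemma sum_conv (V : Finset ℝ) (f : ℝ → ℝ) :
    ∑ v ∈ V, f v = ∑ i ∈ range (V.sort (· ≤ ·)).length, f ((V.sort (· ≤ ·)).getD i 0) := by
  rw [← list_sum_conv, ← Multiset.sum_coe, ← Multiset.map_coe, Finset.sort_eq V (· ≤ ·)]
  exact Finset.sum_eq_multiset_sum V f

private lemma lemA (n : ℕ) (x d G : ℕ → ℝ)
    (hx : ∀ i j : ℕ, i < j → j < n → x i < x j)
    (hd0 : ∑ i ∈ range n, d i = 0)
    (hd1 : ∑ i ∈ range n, d i * x i = 0)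
    (hH : ∀ m, m < n → 0 ≤ ∑ i ∈ range n, d i * max 0 (x m - x i))
    (hG : ∀ i, i + 2 < n →
      (x (i+1) - x i) * (G (i+2) - G (i+1)) ≤ (x (i+2) - x (i+1)) * (G (i+1) - G i)) :
    ∑ i ∈ range n, d i * G i ≤ 0 := by
  rcases Nat.eq_zero_or_pos n with hn | hn
  · simp [hn]
  set P : ℕ → ℝ := fun k => ∑ i ∈ range k, d i with hP
  set s : ℕ → ℝ := fun i => (G (i+1) - G i) / (x (i+1) - x i) with hs
  set H : ℕ → ℝ := fun m => ∑ k ∈ range m, P (k+1) * (x (k+1) - x k) with hHdef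
  have hPn : P n = 0 := hd0
  have hP0 : P 0 = 0 := by simp [hP]
  have hdi : ∀ i, d i = P (i+1) - P i := by
    intro i; simp [hP, Finset.sum_range_succ]
  have hHm : ∀ m, m < n → H m = ∑ i ∈ range n, d i * max 0 (x m - x i) := by
    intro m hm
    have e1 : ∑ i ∈ range n, d i * max 0 (x m - x i)
        = ∑ i ∈ range n, (P (i+1) - P i) * max 0 (x m - x i) :=
      Finset.sum_congr rfl fun i _ => by rw [← hdi]
    have e2 : ∑ i ∈ range n, P (i+1) * (max 0 (x m - x (i+1)) - max 0 (x m - x i))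
        = -H m := by
      have van : ∀ i ∈ range n, i ∉ range m →
          P (i+1) * (max 0 (x m - x (i+1)) - max 0 (x m - x i)) = 0 := by
        intro i hi him
        rw [Finset.mem_range] at hi him
        push_neg at him
        rcases eq_or_lt_of_le (Nat.succ_le_of_lt hi) with h1 | h1
        · have h1' : i + 1 = n := h1
          rw [h1', hPn, zero_mul]
        · have hx1 : x m ≤ x i := by
            rcases eq_or_lt_of_le him with h | h
            · rw [h]
            · exact le_of_lt (hx m i h (by omega))
          have hx2 : x m ≤ x (i+1) := le_of_lt (lt_of_le_of_lt hx1 (hx i (i+1) (by omega) h1))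
          rw [max_eq_left (by linarith), max_eq_left (by linarith), sub_zero, mul_zero]
      rw [← Finset.sum_subset (Finset.range_subset_range.2 hm.le) van]
      have main : ∀ i ∈ range m,
          P (i+1) * (max 0 (x m - x (i+1)) - max 0 (x m - x i))
            = -(P (i+1) * (x (i+1) - x i)) := by
        intro i hi
        rw [Finset.mem_range] at hi
        have hx1 : x i < x m := hx i m hi hm
        have hx2 : x (i+1) ≤ x m := by
          rcases eq_or_lt_of_le (Nat.succ_le_of_lt hi) with h | h
          · have h' : i + 1 = m := h
            rw [h']
          · exact le_of_lt (hx (i+1) m h hm)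
        rw [max_eq_right (by linarith), max_eq_right (by linarith)]
        ring
      rw [Finset.sum_congr rfl main, Finset.sum_neg_distrib]
    rw [e1, abel1, hPn, hP0, e2] ; ring
  have hH0 : H 0 = 0 := by simp [hHdef]
  have hHn1 : H (n-1) = 0 := by
    rw [hHm (n-1) (by omega)]
    have : ∀ i ∈ range n, d i * max 0 (x (n-1) - x i) = d i * x (n-1) - d i * x i := by
      intro i hi
      rw [Finset.mem_range] at hi
      have : x i ≤ x (n-1) := by
        rcases eq_or_lt_of_le (Nat.le_sub_one_of_lt hi) with h | h
        · rw [h]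
        · exact le_of_lt (hx i (n-1) h (by omega))
      rw [max_eq_right (by linarith)] ; ring
    rw [Finset.sum_congr rfl this, Finset.sum_sub_distrib, ← Finset.sum_mul, hd0, hd1]
    ring
  have hHn : H n = 0 := by
    have he : n = (n-1) + 1 := by omega
    rw [hHdef]
    calc ∑ k ∈ range n, P (k+1) * (x (k+1) - x k)
        = ∑ k ∈ range ((n-1)+1), P (k+1) * (x (k+1) - x k) := by rw [← he]
      _ = H (n-1) + P ((n-1)+1) * (x ((n-1)+1) - x (n-1)) := by rw [Finset.sum_range_succ]
      _ = 0 := by rw [hHn1, ← he, hPn] ; ring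
  have step1 : ∑ i ∈ range n, d i * G i
      = - ∑ i ∈ range n, P (i+1) * (G (i+1) - G i) := by
    have e1 : ∑ i ∈ range n, d i * G i = ∑ i ∈ range n, (P (i+1) - P i) * G i :=
      Finset.sum_congr rfl fun i _ => by rw [← hdi]
    rw [e1, abel1, hPn, hP0] ; ring
  have step2 : ∀ i ∈ range n, P (i+1) * (G (i+1) - G i) = (H (i+1) - H i) * s i := by
    intro i hi
    rw [Finset.mem_range] at hi
    have hΔ : H (i+1) - H i = P (i+1) * (x (i+1) - x i) := by
      simp [hHdef, Finset.sum_range_succ]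
    rcases eq_or_lt_of_le (Nat.succ_le_of_lt hi) with h1 | h1
    · have h1' : i + 1 = n := h1
      rw [hΔ, h1', hPn] ; ring
    · have hxx : x i < x (i+1) := hx i (i+1) (by omega) h1
      have hne : x (i+1) - x i ≠ 0 := sub_ne_zero.2 (ne_of_gt hxx)
      rw [hΔ, hs]
      field_simp
  have step3 : ∑ i ∈ range n, d i * G i = ∑ i ∈ range n, H (i+1) * (s (i+1) - s i) := by
    rw [step1, Finset.sum_congr rfl step2, abel1 H s n, hHn, hH0] ; ring
  rw [step3]
  apply Finset.sum_nonpos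
  intro i hi
  rw [Finset.mem_range] at hi
  by_cases h2 : i + 2 < n
  · have hH1 : 0 ≤ H (i+1) := by
      rw [hHm (i+1) (by omega)] ; exact hH (i+1) (by omega)
    have d1 : (0:ℝ) < x (i+1) - x i := sub_pos.2 (hx i (i+1) (by omega) (by omega))
    have d2 : (0:ℝ) < x (i+2) - x (i+1) := sub_pos.2 (hx (i+1) (i+2) (by omega) (by omega))
    have hs1 : s (i+1) ≤ s i := by
      rw [hs]
      dsimp only
      rw [div_le_div_iff₀ d2 d1]
      have := hG i h2
      nlinarith [hG i h2]
    exact mul_nonpos_of_nonneg_of_nonpos hH1 (by linarith)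
  · by_cases h1 : i + 2 = n
    · rw [show i+1 = n-1 by omega, hHn1, zero_mul]
    · rw [show i+1 = n by omega, hHn, zero_mul]

private lemma main_existence (n : ℕ) (x a b : ℕ → ℝ)
    (hx : ∀ i j : ℕ, i < j → j < n → x i < x j)
    (ha0 : ∀ i, i < n → 0 ≤ a i) (hb0 : ∀ i, i < n → 0 ≤ b i)
    (ha1 : ∑ i ∈ range n, a i = 1) (hb1 : ∑ i ∈ range n, b i = 1)
    (hd1 : ∑ i ∈ range n, (a i - b i) * x i = 0)
    (hH : ∀ m, m < n → 0 ≤ ∑ i ∈ range n, (a i - b i) * max 0 (x m - x i)) :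
    ∃ q : ℕ → ℕ → ℝ,
      (∀ t, t < n → (∀ i, 0 ≤ q t i) ∧ (∑ i ∈ range n, q t i) = 1 ∧
        (∑ i ∈ range n, q t i * x i) = x t) ∧
      (∀ j, j < n → ∑ t ∈ range n, b t * q t j = a j) := by
  classical
  set S : Set (Fin n → Fin n → ℝ) :=
    {q | ∀ t : Fin n, (∀ i : Fin n, 0 ≤ q t i) ∧ (∑ i : Fin n, q t i) = 1 ∧
      (∑ i : Fin n, q t i * x (i:ℕ)) = x (t:ℕ)} with hSdef
  set Φ : (Fin n → Fin n → ℝ) → (Fin n → ℝ) :=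
    fun q j => ∑ t : Fin n, b (t:ℕ) * q t j with hΦdef
  set bb : Fin n → ℝ := fun j => a (j:ℕ) with hbbdef
  suffices hbK : bb ∈ Φ '' S by
    obtain ⟨qF, hqS, hqb⟩ := hbK
    refine ⟨fun t i => if ht : t < n then (if hi : i < n then qF ⟨t, ht⟩ ⟨i, hi⟩ else 0) else 0,
      ?_, ?_⟩
    · intro t ht
      obtain ⟨c1, c2, c3⟩ := hqS ⟨t, ht⟩
      refine ⟨?_, ?_, ?_⟩
      · intro i
        by_cases hi : i < n
        · simpa [ht, hi] using c1 ⟨i, hi⟩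
        · simp [ht, hi]
      · rw [← Fin.sum_univ_eq_sum_range
          (fun i => if ht' : t < n then (if hi : i < n then qF ⟨t, ht'⟩ ⟨i, hi⟩ else 0) else 0) n,
          ← c2]
        refine Finset.sum_congr rfl fun i _ => ?_
        simp [ht, i.2]
      · rw [← Fin.sum_univ_eq_sum_range
          (fun i => (if ht' : t < n then (if hi : i < n then qF ⟨t, ht'⟩ ⟨i, hi⟩ else 0) else 0)
            * x i) n, ← c3]
        refine Finset.sum_congr rfl fun i _ => ?_
        simp [ht, i.2]
    · intro j hj
      have hj2 := congrFun hqb ⟨j, hj⟩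
      rw [← Fin.sum_univ_eq_sum_range
        (fun t => b t * (if ht : t < n then (if hi : j < n then qF ⟨t, ht⟩ ⟨j, hi⟩ else 0) else 0))
        n]
      calc ∑ t : Fin n, b (t:ℕ) *
            (if ht : (t:ℕ) < n then (if hi : j < n then qF ⟨(t:ℕ), ht⟩ ⟨j, hi⟩ else 0) else 0)
          = ∑ t : Fin n, b (t:ℕ) * qF t ⟨j, hj⟩ := by
            refine Finset.sum_congr rfl fun t _ => ?_
            simp [t.2, hj]
        _ = a j := hj2
  by_contra hbK
  -- closedness of S
  have hScl : IsClosed S := by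
    have : S = (⋂ t : Fin n, ⋂ i : Fin n, {q : Fin n → Fin n → ℝ | 0 ≤ q t i}) ∩
        ((⋂ t : Fin n, {q : Fin n → Fin n → ℝ | (∑ i : Fin n, q t i) = 1}) ∩
         (⋂ t : Fin n, {q : Fin n → Fin n → ℝ | (∑ i : Fin n, q t i * x (i:ℕ)) = x (t:ℕ)})) := by
      ext q
      simp only [hSdef, Set.mem_setOf_eq, Set.mem_inter_iff, Set.mem_iInter, forall_and]
    rw [this]
    refine IsClosed.inter (isClosed_iInter fun t => isClosed_iInter fun i =>
        isClosed_le continuous_const ((continuous_apply i).comp (continuous_apply t)))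
      (IsClosed.inter (isClosed_iInter fun t => isClosed_eq
          (continuous_finset_sum _ fun i _ => (continuous_apply i).comp (continuous_apply t))
          continuous_const)
        (isClosed_iInter fun t => isClosed_eq
          (continuous_finset_sum _ fun i _ =>
            ((continuous_apply i).comp (continuous_apply t)).mul continuous_const)
          continuous_const))
  have hSbd : Bornology.IsBounded S := by
    apply (Metric.isBounded_closedBall (x := (0 : Fin n → Fin n → ℝ)) (r := 1)).subset
    intro q hq
    rw [Metric.mem_closedBall, dist_zero_right]
    rw [pi_norm_le_iff_of_nonneg zero_le_one]
    intro t
    rw [pi_norm_le_iff_of_nonneg zero_le_one]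
    intro i
    obtain ⟨c1, c2, c3⟩ := hq t
    rw [Real.norm_eq_abs, abs_le]
    have hle : q t i ≤ 1 := by
      have := Finset.single_le_sum (f := fun i => q t i) (fun i _ => c1 i) (Finset.mem_univ i)
      rw [c2] at this
      exact this
    exact ⟨by linarith [c1 i], hle⟩
  have hScp : IsCompact S := Metric.isCompact_of_isClosed_isBounded hScl hSbd
  have hΦc : Continuous Φ := by
    apply continuous_pi
    intro j
    exact continuous_finset_sum _ fun t _ =>
      continuous_const.mul ((continuous_apply j).comp (continuous_apply t))
  have hKcv : Convex ℝ (Φ '' S) := by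
    rintro _ ⟨q, hq, rfl⟩ _ ⟨r, hr, rfl⟩ c e hc he hce
    refine ⟨fun t i => c * q t i + e * r t i, fun t => ?_, ?_⟩
    · obtain ⟨q1, q2, q3⟩ := hq t
      obtain ⟨r1, r2, r3⟩ := hr t
      refine ⟨fun i => add_nonneg (mul_nonneg hc (q1 i)) (mul_nonneg he (r1 i)), ?_, ?_⟩
      · rw [Finset.sum_add_distrib, ← Finset.mul_sum, ← Finset.mul_sum, q2, r2,
          mul_one, mul_one]
        exact hce
      · have hsummand : ∀ i : Fin n, (c * q t i + e * r t i) * x (i:ℕ)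
            = c * (q t i * x (i:ℕ)) + e * (r t i * x (i:ℕ)) := fun i => by ring
        rw [Finset.sum_congr rfl fun i _ => hsummand i, Finset.sum_add_distrib,
          ← Finset.mul_sum, ← Finset.mul_sum, q3, r3]
        linear_combination (x (t:ℕ)) * hce
    · funext j
      show ∑ t : Fin n, b (t:ℕ) * (c * q t j + e * r t j) = (c • Φ q + e • Φ r) j
      simp only [Pi.add_apply, Pi.smul_apply, smul_eq_mul, hΦdef]
      rw [Finset.mul_sum, Finset.mul_sum, ← Finset.sum_add_distrib]
      exact Finset.sum_congr rfl fun t _ => by ring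
  obtain ⟨f, u, hfu, hub⟩ :=
    geometric_hahn_banach_closed_point hKcv (hScp.image hΦc).isClosed hbK
  -- the function g on indices
  set gg : ℕ → ℝ := fun i =>
    if h : i < n then f (fun j' : Fin n => if (⟨i, h⟩ : Fin n) = j' then (1:ℝ) else 0) else 0
    with hggdef
  have hfrep : ∀ z : Fin n → ℝ, f z = ∑ j : Fin n, z j * gg (j:ℕ) := by
    intro z
    conv_lhs => rw [pi_eq_sum_univ z]
    rw [map_sum]
    refine Finset.sum_congr rfl fun j _ => ?_
    rw [map_smul, smul_eq_mul]
    congr 1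
    rw [hggdef]
    simp only
    rw [dif_pos j.2]
  -- the sets A t and their sups
  set A : ℕ → Set ℝ := fun t =>
    {v | ∃ p : ℕ → ℝ, (∀ i, 0 ≤ p i) ∧ (∑ i ∈ range n, p i) = 1 ∧
      (∑ i ∈ range n, p i * x i) = x t ∧ v = ∑ i ∈ range n, p i * gg i} with hAdef
  have hδmem : ∀ t, t < n → gg t ∈ A t := by
    intro t ht
    refine ⟨fun i => if i = t then 1 else 0, fun i => by dsimp only; split <;> norm_num, ?_, ?_, ?_⟩
    · rw [Finset.sum_ite_eq' (range n) t fun _ => (1:ℝ)]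
      simp [ht]
    · have : ∀ i ∈ range n, (if i = t then (1:ℝ) else 0) * x i
          = if i = t then x t else 0 := by
        intro i _
        by_cases h : i = t
        · rw [if_pos h, if_pos h, h, one_mul]
        · rw [if_neg h, if_neg h, zero_mul]
      rw [Finset.sum_congr rfl this, Finset.sum_ite_eq' (range n) t fun _ => x t]
      simp [ht]
    · have : ∀ i ∈ range n, (if i = t then (1:ℝ) else 0) * gg i
          = if i = t then gg t else 0 := by
        intro i _
        by_cases h : i = t
        · rw [if_pos h, if_pos h, h, one_mul]
        · rw [if_neg h, if_neg h, zero_mul]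
      rw [Finset.sum_congr rfl this, Finset.sum_ite_eq' (range n) t fun _ => gg t]
      simp [ht]
  have hAbdd : ∀ t, BddAbove (A t) := by
    intro t
    refine ⟨∑ i ∈ range n, |gg i|, ?_⟩
    rintro v ⟨p, hp0, hp1, -, rfl⟩
    refine Finset.sum_le_sum fun i hi => ?_
    have hpile : p i ≤ 1 := by
      have := Finset.single_le_sum (f := p) (fun j _ => hp0 j) hi
      rw [hp1] at this
      exact this
    calc p i * gg i ≤ p i * |gg i| := mul_le_mul_of_nonneg_left (le_abs_self _) (hp0 i)
      _ ≤ 1 * |gg i| := mul_le_mul_of_nonneg_right hpile (abs_nonneg _)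
      _ = |gg i| := one_mul _
  have hgle : ∀ i, i < n → gg i ≤ sSup (A i) := fun i hi => le_csSup (hAbdd i) (hδmem i hi)
  -- concavity of the hull
  have hconc : ∀ i, i + 2 < n →
      (x (i+1) - x i) * (sSup (A (i+2)) - sSup (A (i+1)))
        ≤ (x (i+2) - x (i+1)) * (sSup (A (i+1)) - sSup (A i)) := by
    intro i h2
    have haa : (0:ℝ) < x (i+2) - x (i+1) := sub_pos.2 (hx (i+1) (i+2) (by omega) (by omega))
    have hbb2 : (0:ℝ) < x (i+1) - x i := sub_pos.2 (hx i (i+1) (by omega) (by omega))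
    have key : (x (i+2) - x (i+1)) * sSup (A i) + (x (i+1) - x i) * sSup (A (i+2))
        ≤ (x (i+2) - x i) * sSup (A (i+1)) := by
      apply le_of_forall_pos_le_add
      intro ε hε
      set aa := x (i+2) - x (i+1) with haadef
      set bc := x (i+1) - x i with hbcdef
      have habc : (0:ℝ) < aa + bc := by linarith
      set δ := ε / (aa + bc) with hδdef
      have hδpos : 0 < δ := div_pos hε habc
      obtain ⟨u1, hu1A, hu1⟩ := exists_lt_of_lt_csSup ⟨gg i, hδmem i (by omega)⟩
        (show sSup (A i) - δ < sSup (A i) by linarith)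
      obtain ⟨u3, hu3A, hu3⟩ := exists_lt_of_lt_csSup ⟨gg (i+2), hδmem (i+2) (by omega)⟩
        (show sSup (A (i+2)) - δ < sSup (A (i+2)) by linarith)
      obtain ⟨p1, h10, h11, h12, rfl⟩ := hu1A
      obtain ⟨p3, h30, h31, h32, rfl⟩ := hu3A
      set pm : ℕ → ℝ := fun j => (aa * p1 j + bc * p3 j) / (aa + bc) with hpmdef
      have hval : ∑ j ∈ range n, pm j * gg j
          = (aa * (∑ j ∈ range n, p1 j * gg j) + bc * (∑ j ∈ range n, p3 j * gg j))
            / (aa + bc) := by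
        rw [eq_div_iff (ne_of_gt habc), Finset.sum_mul]
        rw [Finset.mul_sum, Finset.mul_sum, ← Finset.sum_add_distrib]
        refine Finset.sum_congr rfl fun j _ => ?_
        rw [hpmdef]
        field_simp
      have hmem : (∑ j ∈ range n, pm j * gg j) ∈ A (i+1) := by
        refine ⟨pm, ?_, ?_, ?_, rfl⟩
        · intro j
          exact div_nonneg (add_nonneg (mul_nonneg haa.le (h10 j))
            (mul_nonneg hbb2.le (h30 j))) habc.le
        · rw [← Finset.sum_div]
          rw [Finset.sum_add_distrib, ← Finset.mul_sum, ← Finset.mul_sum, h11, h31]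
          field_simp
        · have : ∀ j ∈ range n, pm j * x j
              = (aa * (p1 j * x j) + bc * (p3 j * x j)) / (aa + bc) := by
            intro j _
            rw [hpmdef]
            field_simp
          rw [Finset.sum_congr rfl this, ← Finset.sum_div, Finset.sum_add_distrib,
            ← Finset.mul_sum, ← Finset.mul_sum, h12, h32, div_eq_iff (ne_of_gt habc),
            haadef, hbcdef]
          ring
      have hle := le_csSup (hAbdd (i+1)) hmem
      rw [hval, div_le_iff₀ habc] at hle
      have e1 : aa * (sSup (A i) - δ) ≤ aa * (∑ j ∈ range n, p1 j * gg j) :=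
        mul_le_mul_of_nonneg_left hu1.le haa.le
      have e3 : bc * (sSup (A (i+2)) - δ) ≤ bc * (∑ j ∈ range n, p3 j * gg j) :=
        mul_le_mul_of_nonneg_left hu3.le hbb2.le
      have hδε : (aa + bc) * δ = ε := by
        rw [hδdef]
        field_simp
      have hxab : x (i+2) - x i = aa + bc := by rw [haadef, hbcdef]; ring
      rw [hxab]
      nlinarith [e1, e3, hle]
    linarith [key]
  -- convex order inequality for the hull
  have hlemA := lemA n x (fun i => a i - b i) (fun t => sSup (A t)) hx
    (by rw [Finset.sum_sub_distrib, ha1, hb1]; ring)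
    hd1 hH hconc
  have hchain : ∑ i ∈ range n, a i * gg i ≤ ∑ i ∈ range n, b i * sSup (A i) := by
    have h1 : ∑ i ∈ range n, a i * gg i ≤ ∑ i ∈ range n, a i * sSup (A i) :=
      Finset.sum_le_sum fun i hi =>
        mul_le_mul_of_nonneg_left (hgle i (Finset.mem_range.1 hi)) (ha0 i (Finset.mem_range.1 hi))
    have h2 : ∑ i ∈ range n, (a i - b i) * sSup (A i)
        = ∑ i ∈ range n, a i * sSup (A i) - ∑ i ∈ range n, b i * sSup (A i) := by
      rw [← Finset.sum_sub_distrib]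
      exact Finset.sum_congr rfl fun i _ => by ring
    linarith [hlemA, h1, h2.symm]
  -- choose near-optimal rows
  set ε := (f bb - u) / 2 with hεdef
  have hεpos : 0 < ε := by rw [hεdef]; linarith [hub]
  have hchoose : ∀ t : Fin n, ∃ pp : ℕ → ℝ, (∀ i, 0 ≤ pp i) ∧
      (∑ i ∈ range n, pp i) = 1 ∧ (∑ i ∈ range n, pp i * x i) = x (t:ℕ) ∧
      sSup (A (t:ℕ)) - ε < ∑ i ∈ range n, pp i * gg i := by
    intro t
    obtain ⟨v, hvA, hv⟩ := exists_lt_of_lt_csSup ⟨gg (t:ℕ), hδmem (t:ℕ) t.2⟩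
      (show sSup (A (t:ℕ)) - ε < sSup (A (t:ℕ)) by linarith)
    obtain ⟨pp, c0, c1, c2, rfl⟩ := hvA
    exact ⟨pp, c0, c1, c2, hv⟩
  choose p hp0 hp1 hp2 hp3 using hchoose
  set qq : Fin n → Fin n → ℝ := fun t i => p t (i:ℕ) with hqqdef
  have hqqS : qq ∈ S := by
    intro t
    refine ⟨fun i => hp0 t (i:ℕ), ?_, ?_⟩
    · rw [Fin.sum_univ_eq_sum_range (fun i => p t i) n]
      exact hp1 t
    · rw [Fin.sum_univ_eq_sum_range (fun i => p t i * x i) n]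
      exact hp2 t
  have hlt : f (Φ qq) < u := hfu _ ⟨qq, hqqS, rfl⟩
  have hfq : f (Φ qq) = ∑ t : Fin n, b (t:ℕ) * (∑ j ∈ range n, p t j * gg j) := by
    rw [hfrep (Φ qq)]
    calc ∑ j : Fin n, Φ qq j * gg (j:ℕ)
        = ∑ j : Fin n, ∑ t : Fin n, b (t:ℕ) * qq t j * gg (j:ℕ) := by
          refine Finset.sum_congr rfl fun j _ => ?_
          rw [hΦdef]
          rw [Finset.sum_mul]
      _ = ∑ t : Fin n, ∑ j : Fin n, b (t:ℕ) * qq t j * gg (j:ℕ) := Finset.sum_comm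
      _ = ∑ t : Fin n, b (t:ℕ) * ∑ j : Fin n, qq t j * gg (j:ℕ) := by
          refine Finset.sum_congr rfl fun t _ => ?_
          rw [Finset.mul_sum]
          exact Finset.sum_congr rfl fun j _ => by ring
      _ = ∑ t : Fin n, b (t:ℕ) * (∑ j ∈ range n, p t j * gg j) := by
          refine Finset.sum_congr rfl fun t _ => ?_
          rw [Fin.sum_univ_eq_sum_range (fun j => p t j * gg j) n]
  have hlow : ∑ t : Fin n, b (t:ℕ) * (sSup (A (t:ℕ)) - ε)
      ≤ f (Φ qq) := by
    rw [hfq]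
    exact Finset.sum_le_sum fun t _ =>
      mul_le_mul_of_nonneg_left (hp3 t).le (hb0 (t:ℕ) t.2)
  have hlow2 : ∑ t : Fin n, b (t:ℕ) * (sSup (A (t:ℕ)) - ε)
      = ∑ t ∈ range n, b t * sSup (A t) - ε := by
    rw [Fin.sum_univ_eq_sum_range (fun t => b t * (sSup (A t) - ε)) n]
    have : ∀ t ∈ range n, b t * (sSup (A t) - ε) = b t * sSup (A t) - b t * ε := by
      intro t _
      ring
    rw [Finset.sum_congr rfl this, Finset.sum_sub_distrib, ← Finset.sum_mul, hb1, one_mul]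
  have hfb : f bb = ∑ i ∈ range n, a i * gg i := by
    rw [hfrep bb]
    rw [Fin.sum_univ_eq_sum_range (fun j => a j * gg j) n]
  have : f bb - ε ≤ f (Φ qq) := by
    rw [hfb]
    linarith [hlow, hlow2, hchain]
  rw [hεdef] at this
  linarith [hub, hlt]

/-- Martingale coupling (Strassen) on a finite set: if `ν` is a mean-preserving contraction
of `μ` (equal means and `∫_{-∞}^{x}(F_μ - F_ν) ≥ 0` for all `x`, expressed via the
equivalent condition on expected shortfalls `E[(y - X)⁺]`), then there is a family
`(Q_t)_{t ∈ supp ν}` of probability measures on `V` with barycenter `t` averaging to `μ`. -/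
theorem martingale_coupling_finite (V : Finset ℝ) (μ ν : ℝ → ℝ)
    (hμ0 : ∀ x, 0 ≤ μ x) (hν0 : ∀ x, 0 ≤ ν x)
    (hμ1 : ∑ x ∈ V, μ x = 1) (hν1 : ∑ x ∈ V, ν x = 1)
    (hμs : ∀ x ∉ V, μ x = 0) (hνs : ∀ x ∉ V, ν x = 0)
    (hmean : ∑ x ∈ V, μ x * x = ∑ x ∈ V, ν x * x)
    (hmpc : ∀ y : ℝ, ∑ x ∈ V, ν x * max 0 (y - x) ≤ ∑ x ∈ V, μ x * max 0 (y - x)) :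
    ∃ Q : ℝ → ℝ → ℝ,
      (∀ t, ν t ≠ 0 →
        (∀ x, 0 ≤ Q t x) ∧ (∀ x ∉ V, Q t x = 0) ∧
        (∑ x ∈ V, Q t x = 1) ∧ (∑ x ∈ V, Q t x * x = t)) ∧
      (∀ x ∈ V, ∑ t ∈ V, ν t * Q t x = μ x) := by
  classical
  set n := V.card with hncard
  set l := V.sort (· ≤ ·) with hldef
  have hlen : l.length = n := Finset.length_sort (· ≤ ·)
  set x : ℕ → ℝ := fun i => l.getD i 0 with hxdef
  have hconv : ∀ f : ℝ → ℝ, ∑ v ∈ V, f v = ∑ i ∈ range n, f (x i) := by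
    intro f
    rw [sum_conv V f, ← hldef, hlen]
  have hxlt : ∀ i j : ℕ, i < j → j < n → x i < x j := by
    intro i j hij hj
    have hj' : j < l.length := by omega
    have hi' : i < l.length := by omega
    rw [hxdef]
    simp only
    rw [List.getD_eq_get _ _ ⟨i, hi'⟩, List.getD_eq_get _ _ ⟨j, hj'⟩]
    exact (List.pairwise_iff_get.1 (List.sortedLT_iff_pairwise.1 V.sortedLT_sort)) ⟨i, hi'⟩ ⟨j, hj'⟩ hij
  have hxmem : ∀ i, i < n → x i ∈ V := by
    intro i hi
    have hi' : i < l.length := by omega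
    rw [hxdef]
    simp only
    rw [List.getD_eq_get _ _ ⟨i, hi'⟩]
    exact (Finset.mem_sort (· ≤ ·)).1 (l.get_mem _)
  set idx : ℝ → ℕ := fun v => l.idxOf v with hidxdef
  have hmeml : ∀ v ∈ V, v ∈ l := fun v hv => (Finset.mem_sort (· ≤ ·)).2 hv
  have hidxlt : ∀ v ∈ V, idx v < n := by
    intro v hv
    rw [← hlen]
    exact List.idxOf_lt_length_iff.2 (hmeml v hv)
  have hxidx : ∀ v ∈ V, x (idx v) = v := by
    intro v hv
    have h1 : idx v < l.length := by rw [hlen]; exact hidxlt v hv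
    rw [hxdef]
    simp only
    rw [List.getD_eq_getElem _ _ h1]
    exact List.getElem_idxOf h1
  have hidxx : ∀ i, i < n → idx (x i) = i := by
    intro i hi
    have hi' : i < l.length := by omega
    have hx' : x i = l[i] := List.getD_eq_getElem _ _ hi'
    rw [hidxdef]
    simp only
    rw [hx']
    exact List.Nodup.idxOf_getElem (Finset.sort_nodup V (· ≤ ·)) i hi'
  -- apply the abstract existence result
  have ha1 : ∑ i ∈ range n, μ (x i) = 1 := by rw [← hconv μ]; exact hμ1
  have hb1 : ∑ i ∈ range n, ν (x i) = 1 := by rw [← hconv ν]; exact hν1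
  have hmeanx : ∑ i ∈ range n, μ (x i) * x i = ∑ i ∈ range n, ν (x i) * x i := by
    have h1 : ∑ v ∈ V, μ v * v = ∑ i ∈ range n, μ (x i) * x i := hconv (fun v => μ v * v)
    have h2 : ∑ v ∈ V, ν v * v = ∑ i ∈ range n, ν (x i) * x i := hconv (fun v => ν v * v)
    rw [← h1, ← h2]
    exact hmean
  have hd1 : ∑ i ∈ range n, (μ (x i) - ν (x i)) * x i = 0 := by
    have : ∀ i ∈ range n, (μ (x i) - ν (x i)) * x i = μ (x i) * x i - ν (x i) * x i :=
      fun i _ => by ring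
    rw [Finset.sum_congr rfl this, Finset.sum_sub_distrib, hmeanx]
    ring
  have hHx : ∀ m, m < n → 0 ≤ ∑ i ∈ range n, (μ (x i) - ν (x i)) * max 0 (x m - x i) := by
    intro m hm
    have h1 : ∑ v ∈ V, μ v * max 0 (x m - v) = ∑ i ∈ range n, μ (x i) * max 0 (x m - x i) :=
      hconv (fun v => μ v * max 0 (x m - v))
    have h2 : ∑ v ∈ V, ν v * max 0 (x m - v) = ∑ i ∈ range n, ν (x i) * max 0 (x m - x i) :=
      hconv (fun v => ν v * max 0 (x m - v))
    have h3 := hmpc (x m)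
    rw [h1, h2] at h3
    have : ∀ i ∈ range n, (μ (x i) - ν (x i)) * max 0 (x m - x i)
        = μ (x i) * max 0 (x m - x i) - ν (x i) * max 0 (x m - x i) := fun i _ => by ring
    rw [Finset.sum_congr rfl this, Finset.sum_sub_distrib]
    linarith
  obtain ⟨q, hq1, hq2⟩ := main_existence n x (fun i => μ (x i)) (fun i => ν (x i)) hxlt
    (fun i _ => hμ0 (x i)) (fun i _ => hν0 (x i)) ha1 hb1 hd1 hHx
  refine ⟨fun t y => if t ∈ V ∧ y ∈ V then q (idx t) (idx y) else 0, ?_, ?_⟩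
  · intro t hνt
    have htV : t ∈ V := by
      by_contra h
      exact hνt (hνs t h)
    have hidxt := hidxlt t htV
    obtain ⟨c1, c2, c3⟩ := hq1 (idx t) hidxt
    refine ⟨?_, ?_, ?_, ?_⟩
    · intro y
      dsimp only
      split
      · exact c1 _
      · exact le_refl 0
    · intro y hy
      dsimp only
      rw [if_neg (fun h => hy h.2)]
    · have h1 : ∑ y ∈ V, (if t ∈ V ∧ y ∈ V then q (idx t) (idx y) else 0)
          = ∑ i ∈ range n, (if t ∈ V ∧ x i ∈ V then q (idx t) (idx (x i)) else 0) :=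
        hconv (fun y => if t ∈ V ∧ y ∈ V then q (idx t) (idx y) else 0)
      rw [h1]
      rw [← c2]
      refine Finset.sum_congr rfl fun i hi => ?_
      rw [if_pos ⟨htV, hxmem i (Finset.mem_range.1 hi)⟩, hidxx i (Finset.mem_range.1 hi)]
    · have h1 : ∑ y ∈ V, (if t ∈ V ∧ y ∈ V then q (idx t) (idx y) else 0) * y
          = ∑ i ∈ range n, (if t ∈ V ∧ x i ∈ V then q (idx t) (idx (x i)) else 0) * x i :=
        hconv (fun y => (if t ∈ V ∧ y ∈ V then q (idx t) (idx y) else 0) * y)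
      rw [h1]
      have h2 : ∑ i ∈ range n, (if t ∈ V ∧ x i ∈ V then q (idx t) (idx (x i)) else 0) * x i
          = ∑ i ∈ range n, q (idx t) i * x i := by
        refine Finset.sum_congr rfl fun i hi => ?_
        rw [if_pos ⟨htV, hxmem i (Finset.mem_range.1 hi)⟩, hidxx i (Finset.mem_range.1 hi)]
      rw [h2, c3, hxidx t htV]
  · intro y hyV
    have h1 : ∑ t ∈ V, ν t * (if t ∈ V ∧ y ∈ V then q (idx t) (idx y) else 0)
        = ∑ i ∈ range n, ν (x i) * (if x i ∈ V ∧ y ∈ V then q (idx (x i)) (idx y) else 0) :=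
      hconv (fun t => ν t * (if t ∈ V ∧ y ∈ V then q (idx t) (idx y) else 0))
    rw [h1]
    have h2 : ∑ i ∈ range n, ν (x i) * (if x i ∈ V ∧ y ∈ V then q (idx (x i)) (idx y) else 0)
        = ∑ i ∈ range n, ν (x i) * q i (idx y) := by
      refine Finset.sum_congr rfl fun i hi => ?_
      rw [if_pos ⟨hxmem i (Finset.mem_range.1 hi), hyV⟩, hidxx i (Finset.mem_range.1 hi)]
    rw [h2]
    have h3 := hq2 (idx y) (hidxlt y hyV)
    rw [h3, hxidx y hyV]
end

section
/- In a second-price auction with N bidders, if an information structure and bidding strategy profile satisfy (i) whenever bidder i has the (tie-broken unique) highest bid b_i = max(b), her conditional expected value equals the second-highest bid: E[v_i | s] = secmax(b), and (ii) whenever b_i < max(b), E[v_i | s] ≤ secmax(b), then under this strategy profile each bidder's interim expected surplus is zero, no upward deviation b' > b_i yields strictly positive expected surplus, and no downward deviation does either; hence the profile is a Bayes Nash equilibrium with zero bidder surplus. -/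
open scoped Classical BigOperators

/-- The highest coordinate of a bid profile. -/
noncomputable def maxBid {N : ℕ} (β : Fin N → ℝ) : ℝ := sSup (Set.range β)

/-- The second-highest coordinate of a bid profile. -/
noncomputable def secmax {N : ℕ} (β : Fin N → ℝ) : ℝ :=
  sInf {x | ∃ i : Fin N, x = sSup {y | ∃ j : Fin N, j ≠ i ∧ y = β j}}

/-- Uniform tie-breaking winning share of bidder `i` at bid profile `β`. -/
noncomputable def winShare {N : ℕ} (β : Fin N → ℝ) (i : Fin N) : ℝ :=
  if β i = maxBid β then
    1 / ((Finset.univ.filter fun j => β j = maxBid β).card : ℝ)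
  else 0

section Aux

variable {N : ℕ}

/-- The highest bid among bidders other than `k`. -/
noncomputable def Mk (β : Fin N → ℝ) (k : Fin N) : ℝ :=
  sSup {y | ∃ j : Fin N, j ≠ k ∧ y = β j}

lemma Mk_set_finite (β : Fin N → ℝ) (k : Fin N) :
    {y | ∃ j : Fin N, j ≠ k ∧ y = β j}.Finite :=
  (Set.finite_range β).subset (by rintro y ⟨j, -, rfl⟩; exact ⟨j, rfl⟩)

lemma Mk_set_nonempty (hN : 2 ≤ N) (β : Fin N → ℝ) (k : Fin N) :
    {y | ∃ j : Fin N, j ≠ k ∧ y = β j}.Nonempty := by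
  obtain ⟨j, hj⟩ := Fintype.exists_ne_of_one_lt_card (by simpa using by omega : 1 < Fintype.card (Fin N)) k
  exact ⟨β j, j, hj, rfl⟩

lemma le_Mk (β : Fin N → ℝ) {j k : Fin N} (h : j ≠ k) : β j ≤ Mk β k :=
  le_csSup (Mk_set_finite β k).bddAbove ⟨j, h, rfl⟩

lemma Mk_le (hN : 2 ≤ N) (β : Fin N → ℝ) (k : Fin N) {c : ℝ}
    (h : ∀ j : Fin N, j ≠ k → β j ≤ c) : Mk β k ≤ c :=
  csSup_le (Mk_set_nonempty hN β k) (by rintro y ⟨j, hj, rfl⟩; exact h j hj)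

lemma le_maxBid (β : Fin N → ℝ) (j : Fin N) : β j ≤ maxBid β :=
  le_csSup (Set.finite_range β).bddAbove ⟨j, rfl⟩

lemma exists_maxBid (hN : 2 ≤ N) (β : Fin N → ℝ) : ∃ j, β j = maxBid β := by
  haveI : Nonempty (Fin N) := ⟨⟨0, by omega⟩⟩
  have hne : (Set.range β).Nonempty := Set.range_nonempty β
  have := hne.csSup_mem (Set.finite_range β)
  exact this

lemma Mk_le_maxBid (hN : 2 ≤ N) (β : Fin N → ℝ) (k : Fin N) : Mk β k ≤ maxBid β :=
  Mk_le hN β k fun j _ => le_maxBid β j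

lemma secmax_eq_sInf (β : Fin N → ℝ) :
    secmax β = sInf (Set.range fun k : Fin N => Mk β k) := by
  unfold secmax Mk
  congr 1
  ext y
  constructor
  · rintro ⟨i, rfl⟩; exact ⟨i, rfl⟩
  · rintro ⟨i, rfl⟩; exact ⟨i, rfl⟩

lemma secmax_le_Mk (β : Fin N → ℝ) (i : Fin N) : secmax β ≤ Mk β i := by
  rw [secmax_eq_sInf]
  exact csInf_le (Set.finite_range _).bddBelow ⟨i, rfl⟩

lemma secmax_eq_Mk_of_max (hN : 2 ≤ N) (β : Fin N → ℝ) {i : Fin N}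
    (hi : β i = maxBid β) : secmax β = Mk β i := by
  refine le_antisymm (secmax_le_Mk β i) ?_
  rw [secmax_eq_sInf]
  haveI : Nonempty (Fin N) := ⟨⟨0, by omega⟩⟩
  refine le_csInf (Set.range_nonempty _) ?_
  rintro y ⟨k, rfl⟩
  rcases eq_or_ne k i with rfl | hk
  · exact le_rfl
  · calc Mk β i ≤ maxBid β := Mk_le_maxBid hN β i
      _ = β i := hi.symm
      _ ≤ Mk β k := le_Mk β (Ne.symm hk)

lemma maxBid_eq_Mk_of_lt (hN : 2 ≤ N) (β : Fin N → ℝ) {i : Fin N}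
    (hi : β i < maxBid β) : maxBid β = Mk β i := by
  obtain ⟨j, hj⟩ := exists_maxBid hN β
  have hji : j ≠ i := by rintro rfl; exact absurd hj hi.ne
  exact le_antisymm (hj ▸ le_Mk β hji) (Mk_le_maxBid hN β i)

lemma Mk_update (β : Fin N → ℝ) (i : Fin N) (d : ℝ) :
    Mk (Function.update β i d) i = Mk β i := by
  unfold Mk
  congr 1
  ext y
  constructor
  · rintro ⟨j, hj, rfl⟩; exact ⟨j, hj, Function.update_of_ne hj d β⟩
  · rintro ⟨j, hj, rfl⟩; exact ⟨j, hj, (Function.update_of_ne hj d β).symm⟩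

lemma winShare_nonneg (β : Fin N → ℝ) (i : Fin N) : 0 ≤ winShare β i := by
  unfold winShare
  split
  · positivity
  · exact le_rfl

end Aux

/-- Second-price auction with posterior expected values `x i ω = E[v_i | s]` and bids
`b i ω`. If (i) every highest bidder's posterior expected value equals the second-highest
bid (No-Rent Winner) and (ii) every non-highest bidder's posterior expected value is at
most the second-highest bid, then each bidder's interim expected surplus is zero and no
unilateral deviation yields strictly positive expected surplus; hence the profile is a
Bayes Nash equilibrium with zero bidder surplus. -/
theorem noRentWinner_equilibrium {N : ℕ} (hN : 2 ≤ N) {Ω : Type*} [Fintype Ω]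
    (p : Ω → ℝ) (hp0 : ∀ ω, 0 ≤ p ω) (hp1 : ∑ ω, p ω = 1)
    (x : Fin N → Ω → ℝ) (b : Fin N → Ω → ℝ)
    (hwin : ∀ ω i, b i ω = maxBid (fun j => b j ω) →
      x i ω = secmax (fun j => b j ω))
    (hlose : ∀ ω i, b i ω < maxBid (fun j => b j ω) →
      x i ω ≤ secmax (fun j => b j ω)) :
    (∀ i, ∑ ω, p ω * winShare (fun j => b j ω) i *
        (x i ω - secmax (fun j => b j ω)) = 0) ∧
    (∀ i (d : Ω → ℝ),
      ∑ ω, p ω * winShare (Function.update (fun j => b j ω) i (d ω)) i *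
          (x i ω - secmax (Function.update (fun j => b j ω) i (d ω))) ≤ 0) := by
  constructor
  · intro i
    refine Finset.sum_eq_zero fun ω _ => ?_
    set β : Fin N → ℝ := fun j => b j ω with hβ
    by_cases h : b i ω = maxBid β
    · have hx : x i ω = secmax β := hwin ω i h
      simp [hx]
    · have : winShare β i = 0 := by
        unfold winShare
        rw [if_neg (by exact h)]
      rw [this]; ring
  · intro i d
    refine Finset.sum_nonpos fun ω _ => ?_
    set β : Fin N → ℝ := fun j => b j ω with hβ
    set β' : Fin N → ℝ := Function.update β i (d ω) with hβ'
    by_cases hw : β' i = maxBid β'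
    · have hsec : secmax β' = Mk β i := by
        rw [secmax_eq_Mk_of_max hN β' hw, hβ', Mk_update]
      have hx : x i ω ≤ Mk β i := by
        by_cases hb : b i ω = maxBid β
        · rw [hwin ω i hb, secmax_eq_Mk_of_max hN β hb]
        · have hlt : b i ω < maxBid β :=
            lt_of_le_of_ne (le_maxBid β i) hb
          exact (hlose ω i hlt).trans (secmax_le_Mk β i)
      have hterm : x i ω - secmax β' ≤ 0 := by
        rw [hsec]; linarith
      exact mul_nonpos_of_nonneg_of_nonpos
        (mul_nonneg (hp0 ω) (winShare_nonneg β' i)) hterm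
    · have : winShare β' i = 0 := by
        unfold winShare
        rw [if_neg hw]
      rw [this]; simp
end

section
/- For two bidders with prior λ such that every v ∈ supp(λ) has at most one strictly positive coordinate or equal coordinates, and any ε > 0 smaller than every positive value in supp(λ), the information structure s_1 = v_1 and s_2 ~ Uniform(0, ε) independent of v makes truthful bidding (σ_i(s_i) = s_i) an equilibrium of the second-price auction; the allocation is always efficient, and the seller's expected revenue is at most P(v_1 > 0)·ε/2 ≤ ε, hence bidder surplus is at least E[max(v_1,v_2)] − ε. -/
open MeasureTheory

/-- Winning share of bidder 1 under uniform tie-breaking (two bidders). -/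
noncomputable def w1 (b1 b2 : ℝ) : ℝ :=
  if b2 < b1 then 1 else if b1 = b2 then 1/2 else 0

/-- Winning share of bidder 2 under uniform tie-breaking (two bidders). -/
noncomputable def w2 (b1 b2 : ℝ) : ℝ := w1 b2 b1

section aux

lemma A_truth (v r : ℝ) : w1 v r * (v - min v r) = max (v - r) 0 := by
  unfold w1
  rcases lt_trichotomy r v with h | h | h
  · rw [if_pos h, min_eq_right h.le, one_mul, max_eq_left (by linarith)]
  · subst h
    rw [if_neg (lt_irrefl r), if_pos rfl, min_self]
    simp
  · rw [if_neg (by linarith), if_neg (by linarith), max_eq_right (by linarith), zero_mul]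

lemma A_le (c v r : ℝ) : w1 c r * (v - min c r) ≤ max (v - r) 0 := by
  unfold w1
  rcases lt_trichotomy r c with h | h | h
  · rw [if_pos h, min_eq_right h.le, one_mul]
    exact le_max_left _ _
  · subst h
    rw [if_neg (lt_irrefl r), if_pos rfl, min_self]
    have h1 := le_max_left (v - r) (0:ℝ)
    have h2 := le_max_right (v - r) (0:ℝ)
    rcases le_total (v - r) 0 with h' | h' <;> nlinarith
  · rw [if_neg (by linarith), if_neg (by linarith), zero_mul]
    exact le_max_right _ _

lemma A_abs_le (c v r : ℝ) : |w1 c r * (v - min c r)| ≤ |v - r| := by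
  unfold w1
  rcases lt_trichotomy r c with h | h | h
  · rw [if_pos h, min_eq_right h.le, one_mul]
  · subst h
    rw [if_neg (lt_irrefl r), if_pos rfl, min_self, abs_mul]
    have := abs_nonneg (v - r)
    rw [abs_of_nonneg (by norm_num : (0:ℝ) ≤ 1/2)]
    nlinarith
  · rw [if_neg (by linarith), if_neg (by linarith), zero_mul, abs_zero]
    exact abs_nonneg _

lemma B_abs_le (c v b : ℝ) : |w1 b c * (v - min c b)| ≤ |v - c| := by
  unfold w1
  rcases lt_trichotomy c b with h | h | h
  · rw [if_pos h, min_eq_left h.le, one_mul]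
  · subst h
    rw [if_neg (lt_irrefl c), if_pos rfl, min_self, abs_mul]
    have := abs_nonneg (v - c)
    rw [abs_of_nonneg (by norm_num : (0:ℝ) ≤ 1/2)]
    nlinarith
  · rw [if_neg (by linarith), if_neg (by linarith), zero_mul, abs_zero]
    exact abs_nonneg _

lemma B_le_zero (c v b : ℝ) (hvc : v ≤ c) : w1 b c * (v - min c b) ≤ 0 := by
  unfold w1
  rcases lt_trichotomy c b with h | h | h
  · rw [if_pos h, min_eq_left h.le, one_mul]; linarith
  · subst h
    rw [if_neg (lt_irrefl c), if_pos rfl, min_self]; nlinarith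
  · rw [if_neg (by linarith), if_neg (by linarith), zero_mul]

lemma B_le_v2 (v b : ℝ) (hv : 0 ≤ v) : w1 b 0 * (v - min 0 b) ≤ v := by
  unfold w1
  rcases lt_trichotomy (0:ℝ) b with h | h | h
  · rw [if_pos h, min_eq_left h.le, one_mul]; linarith
  · rw [← h, if_neg (lt_irrefl 0), if_pos rfl, min_self]; nlinarith
  · rw [if_neg (by linarith), if_neg (by linarith), zero_mul]; exact hv

lemma meas_w1_snd (c : ℝ) : Measurable fun r : ℝ => w1 c r := by
  unfold w1
  refine Measurable.ite measurableSet_Iio measurable_const ?_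
  have h : {r : ℝ | c = r} = {c} := by ext x; simp [eq_comm]
  exact Measurable.ite (h ▸ measurableSet_singleton c) measurable_const measurable_const

lemma meas_w1_fst (c : ℝ) : Measurable fun b : ℝ => w1 b c := by
  unfold w1
  refine Measurable.ite measurableSet_Ioi measurable_const ?_
  exact Measurable.ite measurableSet_eq measurable_const measurable_const

lemma meas_A (c v : ℝ) : Measurable fun r : ℝ => w1 c r * (v - min c r) :=
  (meas_w1_snd c).mul (measurable_const.sub (measurable_const.min measurable_id))

lemma meas_B (c v : ℝ) : Measurable fun b : ℝ => w1 b c * (v - min c b) :=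
  (meas_w1_fst c).mul (measurable_const.sub (measurable_const.min measurable_id))

lemma II_of_bdd {f : ℝ → ℝ} {ε : ℝ} (hε : 0 ≤ ε) (hf : Measurable f) (C : ℝ)
    (hC : ∀ r ∈ Set.Ioc (0:ℝ) ε, |f r| ≤ C) : IntervalIntegrable f volume 0 ε := by
  rw [intervalIntegrable_iff_integrableOn_Ioc_of_le hε]
  refine Measure.integrableOn_of_bounded (measure_Ioc_lt_top).ne
    hf.aestronglyMeasurable (M := C) ?_
  filter_upwards [ae_restrict_mem measurableSet_Ioc] with r hr
  simpa [Real.norm_eq_abs] using hC r hr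

lemma integral_linear {v ε : ℝ} : ∫ r in (0:ℝ)..ε, (v - r) = ε * v - ε^2/2 := by
  rw [intervalIntegral.integral_sub intervalIntegrable_const
    intervalIntegral.intervalIntegrable_id,
    intervalIntegral.integral_const, integral_id]
  simp [smul_eq_mul]

end aux

/-- Two bidders with a prior `lam` (supported on `PV`) such that every support profile
has equal coordinates or at most one strictly positive coordinate, and `ε > 0` smaller
than every positive value in the support.  The private private information structure
`s₁ = v₁`, `s₂ ~ Unif(0, ε)` independent of `v` makes truthful bidding an equilibrium of
the second-price auction; the allocation is always efficient; the seller's revenue is at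
most `P(v₁ > 0)·ε/2 ≤ ε`; and bidder surplus is at least `E[max(v₁,v₂)] − ε`. -/
theorem two_bidder_private_private_bidder_surplus
    (PV : Finset (ℝ × ℝ)) (lam : ℝ × ℝ → ℝ)
    (hl0 : ∀ p, 0 ≤ lam p) (hl1 : ∑ p ∈ PV, lam p = 1)
    (hval : ∀ p ∈ PV, lam p ≠ 0 → 0 ≤ p.1 ∧ 0 ≤ p.2)
    (hsupp : ∀ p ∈ PV, lam p ≠ 0 → p.1 = p.2 ∨ p.2 = 0 ∨ p.1 = 0)
    (ε : ℝ) (hε : 0 < ε)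
    (hεsmall : ∀ p ∈ PV, lam p ≠ 0 →
      (0 < p.1 → ε < p.1) ∧ (0 < p.2 → ε < p.2)) :
    -- (a) truthful bidding is a Bayes Nash equilibrium: bidder 1 deviations
    (∀ d : ℝ → ℝ,
      (∑ p ∈ PV, lam p * ((1/ε) * ∫ r in (0:ℝ)..ε,
          w1 (d p.1) r * (p.1 - min (d p.1) r)))
      ≤ ∑ p ∈ PV, lam p * ((1/ε) * ∫ r in (0:ℝ)..ε,
          w1 p.1 r * (p.1 - min p.1 r))) ∧
    -- bidder 2 deviations (measurable functions of her signal r)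
    (∀ d : ℝ → ℝ, Measurable d →
      (∑ p ∈ PV, lam p * ((1/ε) * ∫ r in (0:ℝ)..ε,
          w2 p.1 (d r) * (p.2 - min p.1 (d r))))
      ≤ ∑ p ∈ PV, lam p * ((1/ε) * ∫ r in (0:ℝ)..ε,
          w2 p.1 r * (p.2 - min p.1 r))) ∧
    -- (b) the allocation is always efficient
    (∀ p ∈ PV, lam p ≠ 0 → ∀ r ∈ Set.Ioo 0 ε,
      (0 < w1 p.1 r → p.1 = max p.1 p.2) ∧ (0 < w2 p.1 r → p.2 = max p.1 p.2)) ∧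
    -- (c) revenue is at most P(v₁ > 0)·ε/2 ≤ ε
    ((∑ p ∈ PV, lam p * ((1/ε) * ∫ r in (0:ℝ)..ε, min p.1 r))
        ≤ (∑ p ∈ PV.filter (fun p => 0 < p.1), lam p) * (ε/2) ∧
      (∑ p ∈ PV, lam p * ((1/ε) * ∫ r in (0:ℝ)..ε, min p.1 r)) ≤ ε) ∧
    -- (d) bidder surplus is at least E[max(v₁, v₂)] − ε
    (∑ p ∈ PV, lam p * ((1/ε) * ∫ r in (0:ℝ)..ε,
        w1 p.1 r * (p.1 - min p.1 r) + w2 p.1 r * (p.2 - min p.1 r)))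
      ≥ (∑ p ∈ PV, lam p * max p.1 p.2) - ε := by
  have hε' : (0:ℝ) ≤ ε := hε.le
  have hεne : ε ≠ 0 := hε.ne'
  -- helper: if ε < v then bidder 2's truthful term vanishes on [0, ε]
  have hT2zero : ∀ v v2 : ℝ, ε < v → ∀ r ∈ Set.Icc (0:ℝ) ε,
      w1 r v * (v2 - min v r) = 0 := by
    intro v v2 hv r hr
    have h1 : ¬ v < r := by linarith [hr.2]
    have h2 : r ≠ v := by intro h; rw [h] at hr; linarith [hr.2]
    unfold w1
    rw [if_neg h1, if_neg h2, zero_mul]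
  refine ⟨?_, ?_, ?_, ?_, ?_⟩
  · -- (a) bidder 1
    intro d
    refine Finset.sum_le_sum fun p _ => ?_
    refine mul_le_mul_of_nonneg_left (mul_le_mul_of_nonneg_left ?_ (by positivity)) (hl0 p)
    simp only [A_truth]
    refine intervalIntegral.integral_mono_on hε' ?_ ?_ (fun r _ => A_le _ _ _)
    · refine II_of_bdd hε' (meas_A _ _) (|p.1| + ε) fun r hr => ?_
      calc |w1 (d p.1) r * (p.1 - min (d p.1) r)| ≤ |p.1 - r| := A_abs_le _ _ _
        _ ≤ |p.1 - 0| + |0 - r| := abs_sub_le _ _ _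
        _ ≤ |p.1| + ε := by
            rw [sub_zero, zero_sub, abs_neg, abs_of_nonneg hr.1.le]
            linarith [hr.2]
    · exact ((continuous_const.sub continuous_id).max continuous_const).intervalIntegrable 0 ε
  · -- (a) bidder 2
    intro d hd
    refine Finset.sum_le_sum fun p hp => ?_
    by_cases hlp : lam p = 0
    · simp [hlp]
    refine mul_le_mul_of_nonneg_left (mul_le_mul_of_nonneg_left ?_ (by positivity)) (hl0 p)
    obtain ⟨hv1, hv2⟩ := hval p hp hlp
    have hIdev : IntervalIntegrable
        (fun r => w2 p.1 (d r) * (p.2 - min p.1 (d r))) volume 0 ε := by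
      unfold w2
      exact II_of_bdd hε' ((meas_B p.1 p.2).comp hd) |p.2 - p.1| fun r _ => B_abs_le _ _ _
    have hItr : IntervalIntegrable
        (fun r => w2 p.1 r * (p.2 - min p.1 r)) volume 0 ε := by
      unfold w2
      exact II_of_bdd hε' (meas_B p.1 p.2) |p.2 - p.1| fun r _ => B_abs_le _ _ _
    rcases eq_or_lt_of_le hv1 with h0 | h0
    · -- p.1 = 0
      refine intervalIntegral.integral_mono_ae_restrict hε' hIdev hItr ?_
      have hne : ∀ᵐ r : ℝ ∂volume, r ≠ 0 := by
        rw [ae_iff]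
        simp
      filter_upwards [ae_restrict_mem measurableSet_Icc, ae_restrict_of_ae hne]
        with r hr hr0
      have hrpos : 0 < r := lt_of_le_of_ne hr.1 (Ne.symm hr0)
      show w2 p.1 (d r) * (p.2 - min p.1 (d r)) ≤ w2 p.1 r * (p.2 - min p.1 r)
      unfold w2
      rw [← h0]
      have htr : w1 r 0 * (p.2 - min 0 r) = p.2 := by
        unfold w1
        rw [if_pos hrpos, min_eq_left hrpos.le, one_mul, sub_zero]
      rw [htr]
      exact B_le_v2 p.2 (d r) hv2
    · -- 0 < p.1
      have hεv := (hεsmall p hp hlp).1 h0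
      have hv21 : p.2 ≤ p.1 := by
        rcases hsupp p hp hlp with h | h | h
        · exact h.ge
        · rw [h]; exact hv1
        · linarith
      refine intervalIntegral.integral_mono_on hε' hIdev hItr fun r hr => ?_
      show w2 p.1 (d r) * (p.2 - min p.1 (d r)) ≤ w2 p.1 r * (p.2 - min p.1 r)
      unfold w2
      rw [hT2zero p.1 p.2 hεv r hr]
      exact B_le_zero _ _ _ hv21
  · -- (b) efficiency
    intro p hp hlp r hr
    obtain ⟨hv1, hv2⟩ := hval p hp hlp
    rcases eq_or_lt_of_le hv1 with h0 | h0
    · constructor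
      · intro hw
        exfalso
        have hz : w1 p.1 r = 0 := by
          unfold w1
          rw [if_neg (by rw [← h0]; linarith [hr.1]),
            if_neg (by rw [← h0]; intro h; exact absurd h.symm (ne_of_gt hr.1))]
        rw [hz] at hw
        exact lt_irrefl 0 hw
      · intro _
        rw [← h0, max_eq_right hv2]
    · have hεv := (hεsmall p hp hlp).1 h0
      have hv21 : p.2 ≤ p.1 := by
        rcases hsupp p hp hlp with h | h | h
        · exact h.ge
        · rw [h]; exact hv1
        · linarith
      constructor
      · intro _
        rw [max_eq_left hv21]
      · intro hw
        exfalso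
        have hz : w2 p.1 r = 0 := by
          unfold w2
          exact hT2zero p.1 p.2 hεv r ⟨hr.1.le, hr.2.le⟩ ▸ by
            unfold w1
            rw [if_neg (by linarith [hr.2]), if_neg (by intro h; rw [h] at hr; linarith [hr.2]),
              zero_mul]
        rw [hz] at hw
        exact lt_irrefl 0 hw
  · -- (c) revenue
    have key : ∀ p ∈ PV, lam p * ((1/ε) * ∫ r in (0:ℝ)..ε, min p.1 r)
        = if 0 < p.1 then lam p * (ε/2) else 0 := by
      intro p hp
      by_cases hlp : lam p = 0
      · simp [hlp]
      obtain ⟨hv1, hv2⟩ := hval p hp hlp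
      rcases eq_or_lt_of_le hv1 with h0 | h0
      · rw [if_neg (by rw [← h0]; exact lt_irrefl 0)]
        have hptw : Set.EqOn (fun r : ℝ => min p.1 r) (fun _ => (0:ℝ)) (Set.uIcc 0 ε) := by
          intro r hr
          rw [Set.uIcc_of_le hε'] at hr
          simp only
          rw [← h0, min_eq_left hr.1]
        rw [intervalIntegral.integral_congr hptw, intervalIntegral.integral_const]
        simp
      · have hεv := (hεsmall p hp hlp).1 h0
        rw [if_pos h0]
        have hptw : Set.EqOn (fun r : ℝ => min p.1 r) (fun r => r) (Set.uIcc 0 ε) := by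
          intro r hr
          rw [Set.uIcc_of_le hε'] at hr
          exact min_eq_right (by linarith [hr.2])
        rw [intervalIntegral.integral_congr hptw, integral_id]
        congr 1
        field_simp
        ring
    have hrw : (∑ p ∈ PV, lam p * ((1/ε) * ∫ r in (0:ℝ)..ε, min p.1 r))
        = (∑ p ∈ PV.filter (fun p => 0 < p.1), lam p) * (ε/2) := by
      rw [Finset.sum_congr rfl key, ← Finset.sum_filter, Finset.sum_mul]
    constructor
    · exact le_of_eq hrw
    · rw [hrw]
      have hsub : ∑ p ∈ PV.filter (fun p => 0 < p.1), lam p ≤ 1 := by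
        rw [← hl1]
        exact Finset.sum_le_sum_of_subset_of_nonneg (Finset.filter_subset _ _)
          fun p _ _ => hl0 p
      have hpos : 0 ≤ ∑ p ∈ PV.filter (fun p => 0 < p.1), lam p :=
        Finset.sum_nonneg fun p _ => hl0 p
      nlinarith
  · -- (d) bidder surplus
    rw [ge_iff_le]
    have hsplit : (∑ p ∈ PV, lam p * max p.1 p.2) - ε
        = ∑ p ∈ PV, (lam p * max p.1 p.2 - lam p * ε) := by
      rw [Finset.sum_sub_distrib, ← Finset.sum_mul, hl1, one_mul]
    rw [hsplit]
    refine Finset.sum_le_sum fun p hp => ?_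
    by_cases hlp : lam p = 0
    · simp [hlp]
    obtain ⟨hv1, hv2⟩ := hval p hp hlp
    rcases eq_or_lt_of_le hv1 with h0 | h0
    · -- p.1 = 0
      have hptw : ∀ᵐ r : ℝ ∂volume, r ∈ Set.uIoc (0:ℝ) ε →
          w1 p.1 r * (p.1 - min p.1 r) + w2 p.1 r * (p.2 - min p.1 r) = p.2 := by
        refine ae_of_all _ fun r hr => ?_
        rw [Set.uIoc_of_le hε'] at hr
        have hrpos : 0 < r := hr.1
        unfold w2 w1
        rw [← h0]
        rw [if_neg (by linarith : ¬ r < (0:ℝ)), if_neg (hrpos.ne : (0:ℝ) ≠ r),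
          if_pos hrpos, min_eq_left hrpos.le]
        ring
      have hJ : (∫ r in (0:ℝ)..ε,
          (w1 p.1 r * (p.1 - min p.1 r) + w2 p.1 r * (p.2 - min p.1 r))) = ε * p.2 := by
        rw [intervalIntegral.integral_congr_ae hptw, intervalIntegral.integral_const]
        simp [smul_eq_mul]
      rw [hJ]
      have hmax : max p.1 p.2 = p.2 := by rw [← h0]; exact max_eq_right hv2
      have hval' : (1/ε) * (ε * p.2) = p.2 := by field_simp
      rw [hmax, hval']
      nlinarith [hl0 p, hε]
    · -- 0 < p.1
      have hεv := (hεsmall p hp hlp).1 h0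
      have hv21 : p.2 ≤ p.1 := by
        rcases hsupp p hp hlp with h | h | h
        · exact h.ge
        · rw [h]; exact hv1
        · linarith
      have hptw : Set.EqOn
          (fun r : ℝ => w1 p.1 r * (p.1 - min p.1 r) + w2 p.1 r * (p.2 - min p.1 r))
          (fun r : ℝ => p.1 - r) (Set.uIcc 0 ε) := by
        intro r hr
        rw [Set.uIcc_of_le hε'] at hr
        simp only
        unfold w2
        rw [hT2zero p.1 p.2 hεv r hr, A_truth, max_eq_left (by linarith [hr.2]), add_zero]
      have hJ : (∫ r in (0:ℝ)..ε,
          (w1 p.1 r * (p.1 - min p.1 r) + w2 p.1 r * (p.2 - min p.1 r)))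
          = ε * p.1 - ε^2/2 := by
        rw [intervalIntegral.integral_congr hptw, integral_linear]
      rw [hJ, max_eq_left hv21]
      have hval' : (1/ε) * (ε * p.1 - ε^2/2) = p.1 - ε/2 := by field_simp
      rw [hval']
      nlinarith [hl0 p, hε]
end
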